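/- arXiv:1710.08799 — 4 statements merged into one kernel-verified Lean document; each statement's English description precedes it below -/
import Mathlib

section
/- Let V be a 2p-dimensional oriented real linear subspace of ℂ^m with 2p ≤ m. Then there exist a unitary basis e₁, Je₁, …, e_m, Je_m of ℂ^m (as a real inner product space, J the complex structure) and angles 0 ≤ θ₁ ≤ … ≤ θ_{p−1} ≤ π/2 and θ_{p−1} ≤ θ_p ≤ π such that V is spanned by e₁, Je₁cos θ₁ + e₂ sin θ₁, e₃, Je₃ cos θ₂ + e₄ sin θ₂, …, e_{2p−1}, Je_{2p−1} cos θ_p + e_{2p} sin θ_p. -/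
/-!
Compressing multiplication by `I` to `V` (orthogonally for the real part of the hermitian
product) gives a skew-adjoint operator `T` on `V`. The normal form of `T` (built from the largest
eigenvalue of `-T²` downwards) gives a real orthonormal basis `u₁, v₁, …, u_p, v_p` of `V` in
which the hermitian Gram matrix is `⟪u i, u j⟫ = ⟪v i, v j⟫ = δᵢⱼ`, `⟪u i, v j⟫ = λᵢ I δᵢⱼ` with
`1 ≥ λ₁ ≥ ⋯ ≥ λ_p ≥ 0`. Then `dᵢ = vᵢ - λᵢ I uᵢ` is hermitian-orthogonal to every `uⱼ` and `dⱼ`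
(`j ≠ i`) and has norm `√(1 - λᵢ²)`, so the `uᵢ` and the normalised nonzero `dᵢ` extend to a
unitary basis `e`, and `vᵢ = cos θᵢ I e_{2i} + sin θᵢ e_{2i+1}` for `θᵢ = arccos λᵢ`.
-/

open Module Complex
open scoped InnerProductSpace

lemma Antitone.fin_cons {α : Type*} [Preorder α] {n : ℕ} {a : α} {f : Fin n → α}
    (hf : Antitone f) (ha : ∀ i, f i ≤ a) : Antitone (Fin.cons a f : Fin (n + 1) → α) := by
  intro i j hij
  induction j using Fin.cases with
  | zero => rw [Fin.le_zero_iff.1 hij]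
  | succ j =>
    induction i using Fin.cases with
    | zero => exact ha j
    | succ i => exact hf (Fin.succ_le_succ_iff.1 hij)

section SkewNormalForm

variable {E : Type*} [NormedAddCommGroup E] [InnerProductSpace ℝ E]

lemma LinearMap.IsSymmetric.inner_apply_self_le [FiniteDimensional ℝ E] {S : E →ₗ[ℝ] E}
    (hS : S.IsSymmetric) {n : ℕ} (hn : finrank ℝ E = n) {μ : ℝ}
    (hμ : ∀ i, hS.eigenvalues hn i ≤ μ) (x : E) :
    ⟪S x, x⟫_ℝ ≤ μ * ‖x‖ ^ 2 := by
  let b := hS.eigenvectorBasis hn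
  have hS_inner : ∀ i, ⟪S x, b i⟫_ℝ = hS.eigenvalues hn i * ⟪b i, x⟫_ℝ := fun i => by
    rw [hS x (b i), hS.apply_eigenvectorBasis, real_inner_comm]
    simp [b, real_inner_smul_left]
  calc ⟪S x, x⟫_ℝ = ∑ i, hS.eigenvalues hn i * ⟪b i, x⟫_ℝ ^ 2 := by
        rw [← b.sum_inner_mul_inner (S x) x]
        simp only [hS_inner, real_inner_comm x, sq, mul_assoc]
    _ ≤ ∑ i, μ * ⟪b i, x⟫_ℝ ^ 2 := by gcongr with i; exact hμ i
    _ = μ * ‖x‖ ^ 2 := by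
        rw [← Finset.mul_sum, ← real_inner_self_eq_norm_sq, ← b.sum_inner_mul_inner x x]
        simp only [real_inner_comm x, sq]

lemma orthonormal_sumElim_cons {p : ℕ} {u₀ v₀ : E} (hu₀ : ‖u₀‖ = 1) (hv₀ : ‖v₀‖ = 1)
    (huv₀ : ⟪u₀, v₀⟫_ℝ = 0) {u v : Fin p → (Submodule.span ℝ {u₀, v₀})ᗮ}
    (huv : Orthonormal ℝ (Sum.elim u v)) :
    Orthonormal ℝ (Sum.elim (Fin.cons u₀ fun i => (u i : E)) (Fin.cons v₀ fun i => (v i : E))) := by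
  have hu₀K : ∀ w ∈ (Submodule.span ℝ {u₀, v₀})ᗮ, ⟪u₀, w⟫_ℝ = 0 := fun w hw =>
    Submodule.inner_right_of_mem_orthogonal (Submodule.subset_span (by simp)) hw
  have hv₀K : ∀ w ∈ (Submodule.span ℝ {u₀, v₀})ᗮ, ⟪v₀, w⟫_ℝ = 0 := fun w hw =>
    Submodule.inner_right_of_mem_orthogonal (Submodule.subset_span (by simp)) hw
  rw [orthonormal_iff_ite] at huv ⊢
  simp only [Sum.forall, Fin.forall_fin_succ, Sum.elim_inl, Sum.elim_inr, Fin.cons_zero,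
    Fin.cons_succ] at huv ⊢
  simp [hu₀, hv₀, huv₀, real_inner_comm u₀, real_inner_comm v₀, hu₀K, hv₀K,
    ← Submodule.coe_inner, huv, (Fin.succ_ne_zero _).symm]

lemma finrank_orthogonal_span_pair_add_two [FiniteDimensional ℝ E] {u₀ v₀ : E} (hu₀ : ‖u₀‖ = 1)
    (hv₀ : ‖v₀‖ = 1) (huv₀ : ⟪u₀, v₀⟫_ℝ = 0) :
    finrank ℝ (Submodule.span ℝ {u₀, v₀})ᗮ + 2 = finrank ℝ E := by
  have hli : LinearIndependent ℝ ![u₀, v₀] := by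
    refine Orthonormal.linearIndependent ?_
    rw [orthonormal_iff_ite]
    simp [Fin.forall_fin_two, hu₀, hv₀, huv₀, real_inner_comm u₀]
  have hspan := finrank_span_eq_card hli
  rw [Matrix.range_cons_cons_empty, Fintype.card_fin] at hspan
  have := (Submodule.span ℝ {u₀, v₀}).finrank_add_finrank_orthogonal
  omega

variable {T : E →ₗ[ℝ] E} (hT : ∀ x y, ⟪T x, y⟫_ℝ = -⟪x, T y⟫_ℝ)
include hT

lemma inner_neg_comp_self_apply_of_skew (x y : E) : ⟪(-(T ∘ₗ T)) x, y⟫_ℝ = ⟪T x, T y⟫_ℝ := by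
  simp [inner_neg_left, hT]

lemma isSymmetric_neg_comp_self_of_skew : (-(T ∘ₗ T)).IsSymmetric := fun x y => by
  rw [inner_neg_comp_self_apply_of_skew hT, real_inner_comm,
    ← inner_neg_comp_self_apply_of_skew hT, real_inner_comm]

lemma mem_orthogonal_of_skew {K : Submodule ℝ E} (hK : ∀ y ∈ K, T y ∈ K) {x : E}
    (hx : x ∈ Kᗮ) : T x ∈ Kᗮ := fun y hy => by
  rw [real_inner_comm, hT, real_inner_comm, (Submodule.mem_orthogonal K x).1 hx _ (hK y hy),
    neg_zero]

lemma exists_orthonormal_pair_of_skew [FiniteDimensional ℝ E] {n : ℕ} (hn : finrank ℝ E = n + 2) :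
    ∃ (u v : E) (r : ℝ), ‖u‖ = 1 ∧ ‖v‖ = 1 ∧ ⟪u, v⟫_ℝ = 0 ∧ 0 ≤ r ∧
      T u = r • v ∧ T v = -(r • u) ∧ ∀ x, ‖T x‖ ≤ r * ‖x‖ := by
  have hS := isSymmetric_neg_comp_self_of_skew hT
  let b := hS.eigenvectorBasis hn
  let u := b 0
  let r := ‖T u‖
  have hnorm : ∀ i, ‖b i‖ = 1 := b.orthonormal.1
  have hSu : (-(T ∘ₗ T)) u = hS.eigenvalues hn 0 • u := hS.apply_eigenvectorBasis hn 0
  have hμ : hS.eigenvalues hn 0 = r ^ 2 := by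
    have := inner_neg_comp_self_apply_of_skew hT u u
    rwa [hSu, real_inner_smul_left, real_inner_self_eq_norm_sq, hnorm, one_pow, mul_one,
      real_inner_self_eq_norm_sq] at this
  have hTTu : T (T u) = -(r ^ 2 • u) := by
    rw [← hμ, ← hSu]; simp
  -- `0` indexes the largest eigenvalue of `-T²`, so `‖T u‖` is the operator norm of `T`
  have hbound : ∀ x, ‖T x‖ ≤ r * ‖x‖ := fun x => by
    have := hS.inner_apply_self_le hn (fun i => (hS.eigenvalues_antitone hn) (Fin.zero_le i)) x
    rw [inner_neg_comp_self_apply_of_skew hT, real_inner_self_eq_norm_sq, hμ, ← mul_pow] at this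
    exact (pow_le_pow_iff_left₀ (norm_nonneg _) (by positivity) two_ne_zero).1 this
  have hTu_inner : ⟪u, T u⟫_ℝ = 0 := by linarith [hT u u, real_inner_comm u (T u)]
  rcases (norm_nonneg (T u)).eq_or_lt with hr | hr
  · have hr0 : r = 0 := hr.symm
    have hT1 : T (b 1) = 0 := norm_le_zero_iff.1 (by simpa [hr0, hnorm] using hbound (b 1))
    refine ⟨u, b 1, r, hnorm 0, hnorm 1, b.orthonormal.2 (by simp), hr0.ge, ?_, ?_, hbound⟩
    · rw [hr0, zero_smul, ← norm_eq_zero]; exact hr0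
    · simp [hr0, hT1]
  · refine ⟨u, r⁻¹ • T u, r, hnorm 0, ?_, ?_, hr.le, ?_, ?_, hbound⟩
    · rw [norm_smul, norm_inv, Real.norm_of_nonneg hr.le, inv_mul_cancel₀ hr.ne']
    · rw [real_inner_smul_right, hTu_inner, mul_zero]
    · rw [smul_inv_smul₀ hr.ne']
    · rw [map_smul, hTTu, smul_neg, smul_smul, sq, inv_mul_cancel_left₀ hr.ne']

theorem exists_normalForm_of_skew [FiniteDimensional ℝ E] {p : ℕ} (hp : finrank ℝ E = 2 * p) :
    ∃ (u v : Fin p → E) (lam : Fin p → ℝ), Orthonormal ℝ (Sum.elim u v) ∧ (∀ i, 0 ≤ lam i) ∧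
      Antitone lam ∧ (∀ i, T (u i) = lam i • v i) ∧ ∀ i, T (v i) = -(lam i • u i) := by
  induction p generalizing E with
  | zero =>
    exact ⟨finZeroElim, finZeroElim, finZeroElim, by simp, finZeroElim,
      Subsingleton.antitone _, finZeroElim, finZeroElim⟩
  | succ p ih =>
    obtain ⟨u₀, v₀, r, hu₀, hv₀, huv₀, hr, hTu₀, hTv₀, hbound⟩ :=
      exists_orthonormal_pair_of_skew hT (n := 2 * p) (by rw [hp]; ring)
    have hKperp : finrank ℝ (Submodule.span ℝ {u₀, v₀})ᗮ = 2 * p := by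
      have := finrank_orthogonal_span_pair_add_two hu₀ hv₀ huv₀
      omega
    set K := Submodule.span ℝ {u₀, v₀}
    have hK : ∀ y ∈ K, T y ∈ K := by
      suffices K ≤ K.comap T from fun y hy => this hy
      refine Submodule.span_le.2 ?_
      rintro _ (rfl | rfl)
      · rw [SetLike.mem_coe, Submodule.mem_comap, hTu₀]
        exact K.smul_mem r (Submodule.subset_span (by simp))
      · rw [SetLike.mem_coe, Submodule.mem_comap, hTv₀]
        exact K.neg_mem (K.smul_mem r (Submodule.subset_span (by simp)))
    let T' := T.restrict (p := Kᗮ) (q := Kᗮ) fun x hx => mem_orthogonal_of_skew hT hK hx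
    obtain ⟨u, v, lam, huv, hlam, hanti, hTu, hTv⟩ :=
      ih (T := T') (fun x y => hT x y) hKperp
    have hTuE : ∀ i, T (u i) = lam i • (v i : E) := fun i => congrArg Subtype.val (hTu i)
    have hTvE : ∀ i, T (v i) = -(lam i • (u i : E)) := fun i => congrArg Subtype.val (hTv i)
    have hlam_le : ∀ i, lam i ≤ r := fun i => by
      have hu : ‖(u i : E)‖ = 1 := huv.1 (Sum.inl i)
      have hv : ‖(v i : E)‖ = 1 := huv.1 (Sum.inr i)
      simpa [hTuE, norm_smul, abs_of_nonneg (hlam i), hu, hv] using hbound (u i)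
    exact ⟨Fin.cons u₀ fun i => (u i : E), Fin.cons v₀ fun i => (v i : E), Fin.cons r lam,
      orthonormal_sumElim_cons hu₀ hv₀ huv₀ huv, Fin.cases hr hlam, hanti.fin_cons hlam_le,
      Fin.cases hTu₀ hTuE, Fin.cases hTv₀ hTvE⟩

end SkewNormalForm

theorem Orthonormal.exists_orthonormalBasis_extension_of_embedding {𝕜 E ι κ : Type*} [RCLike 𝕜]
    [NormedAddCommGroup E] [InnerProductSpace 𝕜 E] [FiniteDimensional 𝕜 E] [Fintype ι]
    (card_ι : finrank 𝕜 E = Fintype.card ι) {f : κ → E} (hf : Orthonormal 𝕜 f) (g : κ ↪ ι) :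
    ∃ b : OrthonormalBasis ι 𝕜 E, ∀ k, b (g k) = f k := by
  have hrestrict : (Set.range g).domRestrict (Function.extend g f 0) =
      f ∘ (Equiv.ofInjective g g.injective).symm := by
    ext ⟨_, k, rfl⟩
    simp [Set.domRestrict, g.injective.extend_apply]
  obtain ⟨b, hb⟩ := Orthonormal.exists_orthonormalBasis_extension_of_card_eq card_ι
    (s := Set.range g) (hrestrict ▸ hf.comp _ (Equiv.injective _))
  exact ⟨b, fun k => (hb _ (Set.mem_range_self k)).trans (g.injective.extend_apply f 0 k)⟩

def evenOddEmbedding {p m : ℕ} (h : 2 * p ≤ m) : Fin p ⊕ Fin p ↪ Fin m where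
  toFun := Sum.elim (fun i => ⟨2 * i, by omega⟩) (fun i => ⟨2 * i + 1, by omega⟩)
  inj' := by rintro (i | i) (j | j) hij <;> simp [Fin.ext_iff] at hij ⊢ <;> omega

section ComplexGram

variable {F : Type*} [NormedAddCommGroup F] [InnerProductSpace ℂ F]

section

variable {ι : Type*} [DecidableEq ι] {u v : ι → F} {lam : ι → ℝ}

lemma inner_sub_real_smul_I_smul_eq_zero (hu : Orthonormal ℂ u)
    (huv : ∀ i j, ⟪u i, v j⟫_ℂ = if i = j then lam i * I else 0) (i j : ι) :
    ⟪u i, v j - lam j • I • u j⟫_ℂ = 0 := by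
  rw [orthonormal_iff_ite] at hu
  rw [inner_sub_right, ← Complex.coe_smul, smul_smul, inner_smul_right, huv, hu]
  split_ifs with h <;> simp [h]

lemma inner_sub_real_smul_I_smul (hu : Orthonormal ℂ u) (hv : Orthonormal ℂ v)
    (huv : ∀ i j, ⟪u i, v j⟫_ℂ = if i = j then lam i * I else 0) (i j : ι) :
    ⟪v i - lam i • I • u i, v j - lam j • I • u j⟫_ℂ =
      if i = j then 1 - (lam i : ℂ) ^ 2 else 0 := by
  have hd : ⟪v i - lam i • I • u i, u j⟫_ℂ = 0 := by
    rw [← inner_conj_symm, inner_sub_real_smul_I_smul_eq_zero hu huv, map_zero]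
  rw [orthonormal_iff_ite] at hv
  simp only [← Complex.coe_smul, smul_smul] at hd ⊢
  rw [inner_sub_right, inner_smul_right, hd, mul_zero, sub_zero, inner_sub_left, inner_smul_left,
    huv, hv]
  split_ifs with h
  · simp [h]
    linear_combination (lam j : ℂ) ^ 2 * I_sq
  · simp

lemma norm_sub_real_smul_I_smul_sq (hu : Orthonormal ℂ u) (hv : Orthonormal ℂ v)
    (huv : ∀ i j, ⟪u i, v j⟫_ℂ = if i = j then lam i * I else 0) (i : ι) :
    ‖v i - lam i • I • u i‖ ^ 2 = 1 - lam i ^ 2 := by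
  have := inner_sub_real_smul_I_smul hu hv huv i i
  rw [if_pos rfl, inner_self_eq_norm_sq_to_K] at this
  exact_mod_cast congrArg re this

lemma abs_le_one_of_gram (hu : Orthonormal ℂ u) (hv : Orthonormal ℂ v)
    (huv : ∀ i j, ⟪u i, v j⟫_ℂ = if i = j then lam i * I else 0) (i : ι) : |lam i| ≤ 1 := by
  rw [← sq_le_one_iff_abs_le_one, ← sub_nonneg, ← norm_sub_real_smul_I_smul_sq hu hv huv i]
  positivity

end

theorem exists_orthonormalBasis_of_gram [FiniteDimensional ℂ F] {m p : ℕ} (h2p : 2 * p ≤ m)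
    (hF : finrank ℂ F = m) {u v : Fin p → F} {lam : Fin p → ℝ} (hu : Orthonormal ℂ u)
    (hv : Orthonormal ℂ v)
    (huv : ∀ i j, ⟪u i, v j⟫_ℂ = if i = j then lam i * I else 0) :
    ∃ b : OrthonormalBasis (Fin m) ℂ F, ∀ i : Fin p, b ⟨2 * i, by omega⟩ = u i ∧
      v i = lam i • I • u i + √(1 - lam i ^ 2) • b ⟨2 * i + 1, by omega⟩ := by
  set d := fun i => v i - lam i • I • u i with hd
  have hd_norm : ∀ i, ‖d i‖ = √(1 - lam i ^ 2) := fun i => by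
    rw [← norm_sub_real_smul_I_smul_sq hu hv huv, Real.sqrt_sq (norm_nonneg _)]
  let f : Fin p ⊕ {i // d i ≠ 0} → F := Sum.elim u fun i => (‖d i‖ : ℂ)⁻¹ • d i
  have hud : ∀ i j, ⟪u i, d j⟫_ℂ = 0 := inner_sub_real_smul_I_smul_eq_zero hu huv
  have hdu : ∀ i j, ⟪d i, u j⟫_ℂ = 0 := fun i j => by rw [← inner_conj_symm, hud, map_zero]
  have hdd : ∀ i j, i ≠ j → ⟪d i, d j⟫_ℂ = 0 := fun i j hij => by
    rw [hd, inner_sub_real_smul_I_smul hu hv huv, if_neg hij]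
  have hf : Orthonormal ℂ f := by
    refine ⟨?_, ?_⟩
    · rintro (i | ⟨i, hi⟩)
      exacts [hu.1 i, norm_smul_inv_norm hi]
    · rintro (i | ⟨i, hi⟩) (j | ⟨j, hj⟩) hij
      · exact hu.2 fun h => hij (congrArg _ h)
      · simp [f, inner_smul_right, hud]
      · simp [f, inner_smul_left, hdu]
      · simp [f, inner_smul_left, inner_smul_right, hdd i j fun h => hij (by subst h; rfl)]
  let g := (Function.Embedding.sumMap (.refl _) (.subtype fun i => d i ≠ 0)).trans
    (evenOddEmbedding h2p)
  obtain ⟨b, hb⟩ := hf.exists_orthonormalBasis_extension_of_embedding (by simp [hF]) g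
  refine ⟨b, fun i => ⟨hb (.inl i), ?_⟩⟩
  have hdb : √(1 - lam i ^ 2) • b ⟨2 * i + 1, by omega⟩ = d i := by
    by_cases hdi : d i = 0
    · rw [← hd_norm, hdi, norm_zero, zero_smul]
    · rw [← hd_norm, show b ⟨2 * i + 1, _⟩ = (‖d i‖ : ℂ)⁻¹ • d i from hb (.inr ⟨i, hdi⟩),
        ← Complex.coe_smul, smul_inv_smul₀ (by exact_mod_cast norm_ne_zero_iff.2 hdi)]
  rw [hdb, hd, add_sub_cancel]

end ComplexGram

section ComplexStructureCompression

variable {F : Type*} [NormedAddCommGroup F] [InnerProductSpace ℂ F]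
attribute [local instance] InnerProductSpace.complexToReal

lemma inner_eq_real_inner_add_real_inner_I_smul_mul_I (x y : F) :
    ⟪x, y⟫_ℂ = ⟪x, y⟫_ℝ + ⟪I • x, y⟫_ℝ * I := by
  rw [real_inner_eq_re_inner ℂ, real_inner_eq_re_inner ℂ, inner_smul_left, conj_I]
  simp [re_add_im]

lemma real_inner_I_smul_left (x y : F) : ⟪I • x, y⟫_ℝ = -⟪x, I • y⟫_ℝ := by
  rw [real_inner_eq_re_inner ℂ, real_inner_eq_re_inner ℂ, inner_smul_left, inner_smul_right,
    conj_I]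
  simp

lemma Submodule.exists_compression_I_smul (V : Submodule ℝ F) [FiniteDimensional ℝ V] :
    ∃ T : V →ₗ[ℝ] V, ∀ x y : V, ⟪T x, y⟫_ℝ = ⟪I • (x : F), y⟫_ℝ :=
  ⟨V.orthogonalProjectionOnto.toLinearMap ∘ₗ
      ((I • LinearMap.id : F →ₗ[ℂ] F).restrictScalars ℝ ∘ₗ V.subtype),
    fun _ y => V.inner_orthogonalProjectionOnto_eq_of_mem_right y _⟩

theorem Submodule.exists_gram_normalForm (V : Submodule ℝ F) [FiniteDimensional ℝ V]
    {p : ℕ} (hV : finrank ℝ V = 2 * p) :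
    ∃ (u v : Fin p → F) (lam : Fin p → ℝ), V = Submodule.span ℝ (Set.range (Sum.elim u v)) ∧
      Orthonormal ℂ u ∧ Orthonormal ℂ v ∧
      (∀ i j, ⟪u i, v j⟫_ℂ = if i = j then lam i * I else 0) ∧ (∀ i, 0 ≤ lam i) ∧ Antitone lam := by
  obtain ⟨T, hTI⟩ := V.exists_compression_I_smul
  have hskew : ∀ x y : V, ⟪T x, y⟫_ℝ = -⟪x, T y⟫_ℝ := fun x y => by
    rw [real_inner_comm (T y) x, hTI, hTI, real_inner_I_smul_left, real_inner_comm]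
  obtain ⟨u, v, lam, ho, hlam, hanti, hTu, hTv⟩ := exists_normalForm_of_skew hskew hV
  have hgram : ∀ x y : V, ⟪(x : F), y⟫_ℂ = ⟪x, y⟫_ℝ + ⟪T x, y⟫_ℝ * I := fun x y => by
    rw [hTI]; exact inner_eq_real_inner_add_real_inner_I_smul_mul_I _ _
  have hli := ho.linearIndependent
  rw [orthonormal_iff_ite] at ho
  have huu : ∀ i j, ⟪u i, u j⟫_ℝ = if i = j then 1 else 0 := fun i j => by
    simpa using ho (.inl i) (.inl j)
  have hvv : ∀ i j, ⟪v i, v j⟫_ℝ = if i = j then 1 else 0 := fun i j => by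
    simpa using ho (.inr i) (.inr j)
  have huv : ∀ i j, ⟪u i, v j⟫_ℝ = 0 := fun i j => by simpa using ho (.inl i) (.inr j)
  have hvu : ∀ i j, ⟪v i, u j⟫_ℝ = 0 := fun i j => by simpa using ho (.inr i) (.inl j)
  refine ⟨fun i => u i, fun i => v i, lam, ?_, ?_, ?_, fun i j => ?_, hlam, hanti⟩
  · have hcard : Fintype.card (Fin p ⊕ Fin p) = finrank ℝ V := by simp [hV, two_mul]
    have : Sum.elim (fun i => (u i : F)) (fun i => (v i : F)) = V.subtype ∘ Sum.elim u v := by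
      ext (i | i) <;> rfl
    rw [this, Set.range_comp, ← Submodule.map_span, hli.span_eq_top_of_card_eq_finrank' hcard,
      Submodule.map_subtype_top]
  · rw [orthonormal_iff_ite]
    intro i j
    rw [hgram, hTu, real_inner_smul_left, hvu, huu]
    split_ifs <;> simp
  · rw [orthonormal_iff_ite]
    intro i j
    rw [hgram, hTv, inner_neg_left, real_inner_smul_left, huv, hvv]
    split_ifs <;> simp
  · rw [hgram, hTu, real_inner_smul_left, huv, hvv]
    split_ifs <;> simp

end ComplexStructureCompression

theorem harvey_lawson_canonical_form
    (m p : ℕ) (h2p : 2 * p ≤ m)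
    (V : Submodule ℝ (EuclideanSpace ℂ (Fin m)))
    (hdim : Module.finrank ℝ V = 2 * p) :
    ∃ (b : OrthonormalBasis (Fin m) ℂ (EuclideanSpace ℂ (Fin m))) (θ : Fin p → ℝ),
      (∀ i, 0 ≤ θ i) ∧
      (∀ i j : Fin p, i ≤ j → θ i ≤ θ j) ∧
      (∀ i : Fin p, (i : ℕ) + 1 < p → θ i ≤ Real.pi / 2) ∧
      (∀ i : Fin p, θ i ≤ Real.pi) ∧
      V = Submodule.span ℝ (Set.range (fun x : Fin p ⊕ Fin p =>
        Sum.elim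
          (fun i : Fin p => b ⟨2 * (i : ℕ), by have := i.isLt; omega⟩)
          (fun i : Fin p =>
            Real.cos (θ i) • (Complex.I • b ⟨2 * (i : ℕ), by have := i.isLt; omega⟩)
              + Real.sin (θ i) • b ⟨2 * (i : ℕ) + 1, by have := i.isLt; omega⟩)
          x)) := by
  obtain ⟨u, v, lam, hV, hu, hv, huv, hlam, hanti⟩ := V.exists_gram_normalForm hdim
  obtain ⟨b, hb⟩ := exists_orthonormalBasis_of_gram h2p finrank_euclideanSpace_fin hu hv huv
  refine ⟨b, fun i => Real.arccos (lam i), fun i => Real.arccos_nonneg _,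
    fun i j hij => Real.arccos_le_arccos (hanti hij),
    fun i _ => Real.arccos_le_pi_div_two.2 (hlam i), fun i => Real.arccos_le_pi _, ?_⟩
  rw [hV]
  congr 2
  ext (i | i) : 1
  · exact (hb i).1.symm
  · have hlam1 := abs_le.1 (abs_le_one_of_gram hu hv huv i)
    dsimp only [Sum.elim_inr]
    rw [Real.cos_arccos hlam1.1 hlam1.2, Real.sin_arccos, (hb i).1]
    exact (hb i).2
end

section
/- Let V be a 2p-dimensional oriented real linear subspace of ℂ^m with p + 1 < m. If Re(e^{iφ}Ω₀)(v₁,…,v_{p+1}, ·, …, ·) = 0 as an (m−p−1)-form for all v₁,…,v_{p+1} ∈ V and every choice of v's, where Ω₀ = dz₁∧…∧dz_m and φ ∈ [0,2π), then V is a complex subspace of ℂ^m (i.e. JV = V). -/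
/-!
Because `Ω₀` is `ℂ`-multilinear, multiplying a free slot by `i` multiplies
`e^{iφ} Ω₀(v₁, …, v_{p+1}, u)` by `i`; a free slot exists since `p + 1 < m`, so the vanishing of
all real parts forces `Ω₀(v₁, …, v_{p+1}, u) = 0` for all `u`. Then no `p + 1` vectors of `V` are
`ℂ`-linearly independent, since they could be completed to a `ℂ`-basis of `ℂ^m`. Hence the complex
span of `V` has real dimension at most `2p = dim_ℝ V`, and as it contains `V` it equals `V`.
-/

open Matrix Module Submodule

section StackRows

variable {E : Type*} {k m : ℕ}

/-- The rows `v₁, …, v_k, u₁, …, u_{m-k}`; its determinant is `Ω₀(v₁, …, v_k, u₁, …, u_{m-k})`. -/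
def stackRows (v : Fin k → E) (u : Fin (m - k) → E) : Fin m → E := fun i =>
  if h : (i : ℕ) < k then v ⟨i, h⟩ else u ⟨i - k, by have := i.isLt; omega⟩

theorem stackRows_eq_sumElim_comp (hk : k ≤ m) (v : Fin k → E) (u : Fin (m - k) → E) :
    stackRows v u = Sum.elim v u ∘ finSumFinEquiv.symm ∘ Fin.cast (Nat.add_sub_cancel' hk).symm := by
  funext i
  obtain ⟨i, hi⟩ := i
  by_cases h : i < k
  · have : Fin.cast (Nat.add_sub_cancel' hk).symm ⟨i, hi⟩ = Fin.castAdd (m - k) ⟨i, h⟩ := rfl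
    rw [Function.comp_apply, Function.comp_apply, this, finSumFinEquiv_symm_apply_castAdd]
    simp [stackRows, h]
  · have : Fin.cast (Nat.add_sub_cancel' hk).symm ⟨i, hi⟩
        = Fin.natAdd k ⟨i - k, by omega⟩ := Fin.ext (by simp; omega)
    rw [Function.comp_apply, Function.comp_apply, this, finSumFinEquiv_symm_apply_natAdd]
    simp [stackRows, h]

theorem stackRows_update (v : Fin k → E) (u : Fin (m - k) → E) (j : Fin (m - k)) (x : E) :
    stackRows v (Function.update u j x)
      = Function.update (stackRows v u) ⟨k + j, by omega⟩ x := by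
  funext ⟨i, hi⟩
  by_cases h : i < k
  · have : (⟨i, hi⟩ : Fin m) ≠ ⟨k + j, by omega⟩ := fun he => by simp at he; omega
    simp [stackRows, h, this]
  · by_cases hij : i = k + j
    · subst hij; simp [stackRows]
    · have h1 : (⟨i, hi⟩ : Fin m) ≠ ⟨k + j, by omega⟩ := fun he => by simp at he; omega
      have h2 : (⟨i - k, by omega⟩ : Fin (m - k)) ≠ j := fun he => by
        have := congrArg Fin.val he; simp at this; omega
      simp [stackRows, h, h1, Function.update_of_ne h2]

end StackRows

theorem LinearIndependent.exists_linearIndependent_stackRows {K E : Type*} [DivisionRing K]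
    [AddCommGroup E] [Module K E] [FiniteDimensional K E] {k m : ℕ} (hE : finrank K E = m)
    {v : Fin k → E} (hv : LinearIndependent K v) :
    ∃ u : Fin (m - k) → E, LinearIndependent K (stackRows v u) := by
  obtain ⟨q, hq⟩ := (span K (Set.range v)).exists_isCompl
  have hq_dim : finrank K q = m - k := by
    have := finrank_add_eq_of_isCompl hq
    rw [finrank_span_eq_card hv, Fintype.card_fin] at this
    omega
  let b := finBasisOfFinrankEq K q hq_dim
  have hk : k ≤ m := by
    simpa [hE] using hv.fintype_card_le_finrank
  refine ⟨fun j => b j, ?_⟩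
  rw [stackRows_eq_sumElim_comp hk]
  refine (hv.sum_type (b.linearIndependent.map' q.subtype q.ker_subtype) ?_).comp _
    (finSumFinEquiv.symm.injective.comp (Fin.cast_injective _))
  exact hq.disjoint.mono_right (span_le.mpr (Set.range_subset_iff.mpr fun j => (b j).2))

theorem exists_det_stackRows_ne_zero {K : Type*} [Field K] {k m : ℕ} {v : Fin k → Fin m → K}
    (hv : LinearIndependent K v) : ∃ u, det (of (stackRows v u)) ≠ 0 := by
  obtain ⟨u, hu⟩ := hv.exists_linearIndependent_stackRows (finrank_fin_fun K)
  exact ⟨u, (isUnit_iff_isUnit_det _).mp (linearIndependent_rows_iff_isUnit.mp hu) |>.ne_zero⟩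

theorem det_stackRows_update_smul {R : Type*} [CommRing R] {k m : ℕ} (v : Fin k → Fin m → R)
    (u : Fin (m - k) → Fin m → R) (j : Fin (m - k)) (c : R) :
    det (of (stackRows v (Function.update u j (c • u j)))) = c * det (of (stackRows v u)) := by
  have hrow : of (stackRows v u) ⟨k + j, by omega⟩ = u j := by
    ext
    simp [stackRows]
  have hupdate : of (stackRows v (Function.update u j (c • u j)))
      = (of (stackRows v u)).updateRow ⟨k + j, by omega⟩ (c • u j) := by
    rw [stackRows_update]
    rfl
  rw [hupdate, det_updateRow_smul, ← hrow, updateRow_eq_self]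

theorem det_stackRows_eq_zero_of_re_mul_eq_zero {k m : ℕ} (hk : k < m) {w : ℂ} (hw : w ≠ 0)
    {v : Fin k → Fin m → ℂ} (h : ∀ u, (w * det (of (stackRows v u))).re = 0)
    (u : Fin (m - k) → Fin m → ℂ) : det (of (stackRows v u)) = 0 := by
  have h_rot := h (Function.update u ⟨0, by omega⟩ (Complex.I • u ⟨0, by omega⟩))
  rw [det_stackRows_update_smul, mul_left_comm, Complex.I_mul_re, neg_eq_zero] at h_rot
  exact (mul_eq_zero.mp (Complex.ext (h u) h_rot)).resolve_left hw

theorem finrank_span_lt_of_det_stackRows_eq_zero {K : Type*} [Field K] {k m : ℕ}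
    {S : Set (Fin m → K)}
    (h : ∀ v : Fin k → Fin m → K, (∀ i, v i ∈ S) → ∀ u, det (of (stackRows v u)) = 0) :
    finrank K (span K S) < k := by
  by_contra! hle
  obtain ⟨b, hbS, hb_span, hb⟩ := exists_linearIndependent K S
  have : Fintype b := hb.setFinite.fintype
  have hcard : k ≤ Fintype.card b := by
    rwa [← hb_span, finrank_span_set_eq_card hb, Set.toFinset_card] at hle
  obtain ⟨f⟩ : Nonempty (Fin k ↪ b) := Function.Embedding.nonempty_of_card_le (by simpa using hcard)
  obtain ⟨u, hu⟩ := exists_det_stackRows_ne_zero (hb.comp f f.injective)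
  exact hu (h _ (fun i => hbS (f i).2) u)

theorem Submodule.restrictScalars_span_complex_eq_of_two_mul_finrank_le {E : Type*}
    [AddCommGroup E] [Module ℂ E] [Module ℝ E] [IsScalarTower ℝ ℂ E] [FiniteDimensional ℂ E]
    (V : Submodule ℝ E) (h : 2 * finrank ℂ (span ℂ (V : Set E)) ≤ finrank ℝ V) :
    (span ℂ (V : Set E)).restrictScalars ℝ = V := by
  have : FiniteDimensional ℝ E := .trans ℝ ℂ E
  refine (eq_of_le_of_finrank_le (S₂ := (span ℂ (V : Set E)).restrictScalars ℝ)
    (fun x hx => subset_span hx) ?_).symm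
  have hW : finrank ℝ (span ℂ (V : Set E)) = 2 * finrank ℂ (span ℂ (V : Set E)) := by
    rw [← finrank_mul_finrank ℝ ℂ, Complex.finrank_real_complex]
  exact hW.trans_le h

theorem vanishing_contraction_implies_complex
    (m p : ℕ) (hp : p + 1 < m)
    (V : Submodule ℝ (Fin m → ℂ))
    (hdim : Module.finrank ℝ V = 2 * p)
    (φ : ℝ)
    (hvanish : ∀ v : Fin (p + 1) → (Fin m → ℂ), (∀ i, v i ∈ V) →
      ∀ u : Fin (m - (p + 1)) → (Fin m → ℂ),
        (Complex.exp (φ * Complex.I) *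
          Matrix.det (Matrix.of fun (i j : Fin m) =>
            (if h : (i : ℕ) < p + 1 then v ⟨(i : ℕ), h⟩
             else u ⟨(i : ℕ) - (p + 1), by have := i.isLt; omega⟩) j)).re = 0) :
    ∀ x ∈ V, (Complex.I • x) ∈ V := by
  have hdet : ∀ v : Fin (p + 1) → Fin m → ℂ, (∀ i, v i ∈ V) →
      ∀ u, det (of (stackRows v u)) = 0 := fun v hv =>
    det_stackRows_eq_zero_of_re_mul_eq_zero hp (Complex.exp_ne_zero _) (hvanish v hv)
  have hrank := finrank_span_lt_of_det_stackRows_eq_zero hdet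
  have hV := V.restrictScalars_span_complex_eq_of_two_mul_finrank_le (by omega)
  intro x hx
  rw [← hV]
  exact (span ℂ (V : Set (Fin m → ℂ))).smul_mem Complex.I (subset_span hx)
end

section
/- Let V be a real linear subspace of ℂ^m of real dimension 2(m−1). If both Re(e^{iφ}Ω₀)(v₁,…,v_m) = 0 and Im(e^{iφ}Ω₀)(v₁,…,v_m) = 0 for all v₁,…,v_m ∈ V, where Ω₀ = dz₁∧…∧dz_m and φ ∈ [0,2π), then V is a complex subspace of ℂ^m. -/
/-! If the complex span `W` of `V` were all of `ℂ^m`, then `V` would contain a complex basis of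
`ℂ^m`, whose determinant is nonzero; so `e^{iφ} det` could not vanish on `V`. Hence
`dim_ℂ W ≤ m - 1`, and since `V ⊆ W` with `dim_ℝ W = 2 dim_ℂ W ≤ 2(m - 1) = dim_ℝ V`, the real
subspace `V` equals the complex subspace `W`. -/

open Module Submodule

theorem Matrix.exists_det_ne_zero_of_span_eq_top {K : Type*} [Field K] {m : ℕ}
    {s : Set (Fin m → K)} (hs : span K s = ⊤) :
    ∃ v : Fin m → Fin m → K, (∀ i, v i ∈ s) ∧ (Matrix.of v).det ≠ 0 := by
  let b := Basis.ofSpan hs.ge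
  let v := b.reindex (b.indexEquiv (Pi.basisFun K (Fin m)))
  refine ⟨v, fun i => Basis.ofSpan_subset hs.ge ⟨_, (Basis.reindex_apply ..).symm⟩, ?_⟩
  have hunit : IsUnit (Matrix.of v) :=
    Matrix.linearIndependent_rows_iff_isUnit.mp v.linearIndependent
  exact hunit.map Matrix.detMonoidHom |>.ne_zero

theorem Submodule.finrank_real_restrictScalars {E : Type*} [AddCommGroup E] [Module ℂ E]
    (W : Submodule ℂ E) [Free ℂ W] :
    finrank ℝ (W.restrictScalars ℝ) = 2 * finrank ℂ W := by
  rw [← Complex.finrank_real_complex]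
  exact (finrank_mul_finrank ℝ ℂ W).symm

theorem Submodule.eq_restrictScalars_span_complex_of_finrank_le {E : Type*} [AddCommGroup E]
    [Module ℂ E] [FiniteDimensional ℂ E] (V : Submodule ℝ E)
    (h : 2 * finrank ℂ (span ℂ (V : Set E)) ≤ finrank ℝ V) :
    V = (span ℂ (V : Set E)).restrictScalars ℝ :=
  eq_of_le_of_finrank_le subset_span (by rwa [finrank_real_restrictScalars])

theorem vanishing_re_im_implies_complex_hypersurface_general
    (m : ℕ)
    (V : Submodule ℝ (Fin m → ℂ))
    (hdim : Module.finrank ℝ V = 2 * (m - 1))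
    (φ : ℝ)
    (hvanish : ∀ v : Fin m → (Fin m → ℂ), (∀ i, v i ∈ V) →
      (Complex.exp (φ * Complex.I) * Matrix.det (Matrix.of fun (i j : Fin m) => v i j)).re = 0
      ∧ (Complex.exp (φ * Complex.I) * Matrix.det (Matrix.of fun (i j : Fin m) => v i j)).im = 0) :
    ∀ x ∈ V, (Complex.I • x) ∈ V := by
  set W := span ℂ (V : Set (Fin m → ℂ))
  have hW : W ≠ ⊤ := fun htop => by
    obtain ⟨v, hvV, hdet⟩ := Matrix.exists_det_ne_zero_of_span_eq_top htop
    obtain ⟨hre, him⟩ := hvanish v hvV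
    exact mul_ne_zero (Complex.exp_ne_zero _) hdet (Complex.ext hre him)
  have hWrank : finrank ℂ W < m := by
    simpa using finrank_lt hW
  have hVW : V = W.restrictScalars ℝ :=
    V.eq_restrictScalars_span_complex_of_finrank_le (show 2 * finrank ℂ W ≤ _ by omega)
  intro x hx
  rw [hVW] at hx ⊢
  exact W.smul_mem _ hx

theorem vanishing_re_im_implies_complex_hypersurface
    (m : ℕ) (hm : 0 < m)
    (V : Submodule ℝ (Fin m → ℂ))
    (hdim : Module.finrank ℝ V = 2 * (m - 1))
    (φ : ℝ) (hφ : φ ∈ Set.Ico 0 (2 * Real.pi))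
    (hvanish : ∀ v : Fin m → (Fin m → ℂ), (∀ i, v i ∈ V) →
      (Complex.exp (φ * Complex.I) * Matrix.det (Matrix.of fun (i j : Fin m) => v i j)).re = 0
      ∧ (Complex.exp (φ * Complex.I) * Matrix.det (Matrix.of fun (i j : Fin m) => v i j)).im = 0) :
    ∀ x ∈ V, (Complex.I • x) ∈ V :=
  vanishing_re_im_implies_complex_hypersurface_general m V hdim φ hvanish
end

section
/- With notation as in the Spin(7) decomposition on ℂ⁴ = ℝ⁸ restricted to a complex 2-plane W: for σ₁ ∈ Λ^{1,0}W* ⊗ (W^⊥)^{*0,1} and σ₂ ∈ Λ^{0,1}W* ⊗ (W^⊥)^{*1,0}, the projections vanish: π₇(σ₁) = 0 = π₇(σ₂). -/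
/- STATEMENT 18: with the Spin(7)-decomposition on ℂ⁴ = ℝ⁸ restricted to a complex
2-plane W: mixed-type elements σ₁ ∈ Λ^{1,0}W* ⊗ (W^⊥)^{*0,1} and
σ₂ ∈ Λ^{0,1}W* ⊗ (W^⊥)^{*1,0} satisfy π₇(σ₁) = 0 = π₇(σ₂), where
π₇(v∧w) = (1/2)[v∧w + Φ(v^♯,w^♯,·,·)] and Φ = (1/2)ω∧ω + Re Ω.
We work on the complexification ℂ⊗ℝ⁸ ≅ (Fin 8 → ℂ): a covector of type (1,0) on W has
sharp of type (0,1), parametrized as ζ'(ā) = (ā, iā) for a ∈ W, and a covector of type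
(0,1) on W^⊥ has sharp of type (1,0), ζ(b) = (b, −ib) for b ∈ W^⊥, and symmetrically
for σ₂.  The projections vanish identically as complexified 2-forms. -/

noncomputable def gC (x y : Fin 8 → ℂ) : ℂ := ∑ j, x j * y j

noncomputable def omC (x y : Fin 8 → ℂ) : ℂ :=
  ∑ j : Fin 4, (x ⟨(j : ℕ), by have := j.isLt; omega⟩ * y ⟨(j : ℕ) + 4, by have := j.isLt; omega⟩
    - x ⟨(j : ℕ) + 4, by have := j.isLt; omega⟩ * y ⟨(j : ℕ), by have := j.isLt; omega⟩)

noncomputable def OmC (v : Fin 4 → (Fin 8 → ℂ)) : ℂ :=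
  Matrix.det (Matrix.of fun (a j : Fin 4) =>
    v a ⟨(j : ℕ), by have := j.isLt; omega⟩
      + Complex.I * v a ⟨(j : ℕ) + 4, by have := j.isLt; omega⟩)

noncomputable def OmBarC (v : Fin 4 → (Fin 8 → ℂ)) : ℂ :=
  Matrix.det (Matrix.of fun (a j : Fin 4) =>
    v a ⟨(j : ℕ), by have := j.isLt; omega⟩
      - Complex.I * v a ⟨(j : ℕ) + 4, by have := j.isLt; omega⟩)

noncomputable def halfOmOm (a b x y : Fin 8 → ℂ) : ℂ :=
  omC a b * omC x y - omC a x * omC b y + omC a y * omC b x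

noncomputable def PhiC (a b x y : Fin 8 → ℂ) : ℂ :=
  halfOmOm a b x y + (OmC ![a, b, x, y] + OmBarC ![a, b, x, y]) / 2

/-- Type (1,0) vector ζ(a) = (a, −ia). -/
noncomputable def zeta10 (a : Fin 4 → ℂ) : Fin 8 → ℂ := fun j =>
  if h : (j : ℕ) < 4 then a ⟨(j : ℕ), h⟩
  else -Complex.I * a ⟨(j : ℕ) - 4, by have := j.isLt; omega⟩

/-- Type (0,1) vector ζ'(c) = (c, ic); the (0,1)-vectors of the complexification of the
real span of W are exactly ζ'(ā) for a ∈ W. -/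
noncomputable def zeta01 (c : Fin 4 → ℂ) : Fin 8 → ℂ := fun j =>
  if h : (j : ℕ) < 4 then c ⟨(j : ℕ), h⟩
  else Complex.I * c ⟨(j : ℕ) - 4, by have := j.isLt; omega⟩

/-!
A vector `ζ'(c)` has type (0,1), so `ω(ζ'(c), ·) = -i g(ζ'(c), ·)` and `Ω` vanishes on it; dually
`ω(ζ(b), ·) = i g(ζ(b), ·)` and `Ω̄` vanishes on `ζ(b)`. The pairing `ω(ζ'(ā), ζ(b))` is a multiple of
the hermitian product of `a` and `b`, which is zero for `b ⊥ W`. So only the `ω ∧ ω` part of `Φ`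
survives, and it is exactly `-(A ∧ B)(x, y)`. The second case is the first one up to the
antisymmetry of `π₇`.
-/

open Complex

lemma zeta01_apply_val (c : Fin 4 → ℂ) (j : Fin 4) (h : (j : ℕ) < 8) :
    zeta01 c ⟨j, h⟩ = c j := by
  simp [zeta01]

lemma zeta01_apply_val_add_four (c : Fin 4 → ℂ) (j : Fin 4) (h : (j : ℕ) + 4 < 8) :
    zeta01 c ⟨j + 4, h⟩ = I * c j := by
  simp [zeta01]

lemma zeta10_apply_val (b : Fin 4 → ℂ) (j : Fin 4) (h : (j : ℕ) < 8) :
    zeta10 b ⟨j, h⟩ = b j := by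
  simp [zeta10]

lemma zeta10_apply_val_add_four (b : Fin 4 → ℂ) (j : Fin 4) (h : (j : ℕ) + 4 < 8) :
    zeta10 b ⟨j + 4, h⟩ = -I * b j := by
  simp [zeta10]

lemma gC_eq_sum_four (x y : Fin 8 → ℂ) :
    gC x y = ∑ j : Fin 4, (x ⟨j, by omega⟩ * y ⟨j, by omega⟩
      + x ⟨j + 4, by omega⟩ * y ⟨j + 4, by omega⟩) := by
  rw [Finset.sum_add_distrib]
  refine (Fin.sum_univ_add (fun k : Fin (4 + 4) => x k * y k)).trans ?_
  congr 1

lemma omC_swap (x y : Fin 8 → ℂ) : omC y x = -omC x y := by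
  simp only [omC, ← Finset.sum_neg_distrib]
  congr 1 with j
  ring

lemma omC_zeta01_left (c : Fin 4 → ℂ) (x : Fin 8 → ℂ) :
    omC (zeta01 c) x = -I * gC (zeta01 c) x := by
  simp only [omC, gC_eq_sum_four, Finset.mul_sum, zeta01_apply_val, zeta01_apply_val_add_four]
  congr 1 with j
  linear_combination c j * x ⟨j + 4, by omega⟩ * I_mul_I

lemma omC_zeta10_left (b : Fin 4 → ℂ) (x : Fin 8 → ℂ) :
    omC (zeta10 b) x = I * gC (zeta10 b) x := by
  simp only [omC, gC_eq_sum_four, Finset.mul_sum, zeta10_apply_val, zeta10_apply_val_add_four]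
  congr 1 with j
  linear_combination b j * x ⟨j + 4, by omega⟩ * I_mul_I

lemma omC_zeta01_zeta10 (c b : Fin 4 → ℂ) :
    omC (zeta01 c) (zeta10 b) = -2 * I * ∑ j, c j * b j := by
  simp only [omC, Finset.mul_sum, zeta01_apply_val, zeta01_apply_val_add_four,
    zeta10_apply_val, zeta10_apply_val_add_four]
  congr 1 with j
  ring

lemma OmC_eq_zero_of_zeta01 (v : Fin 4 → Fin 8 → ℂ) (i : Fin 4) (c : Fin 4 → ℂ)
    (hv : v i = zeta01 c) : OmC v = 0 := by
  refine Matrix.det_eq_zero_of_row_eq_zero i fun j => ?_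
  simp only [Matrix.of_apply, hv, zeta01_apply_val, zeta01_apply_val_add_four]
  linear_combination c j * I_mul_I

lemma OmBarC_eq_zero_of_zeta10 (v : Fin 4 → Fin 8 → ℂ) (i : Fin 4) (b : Fin 4 → ℂ)
    (hv : v i = zeta10 b) : OmBarC v = 0 := by
  refine Matrix.det_eq_zero_of_row_eq_zero i fun j => ?_
  simp only [Matrix.of_apply, hv, zeta10_apply_val, zeta10_apply_val_add_four]
  linear_combination b j * I_mul_I

lemma det_swap_rows_zero_one {R : Type*} [CommRing R] {n : ℕ}
    (M : Matrix (Fin (n + 2)) (Fin (n + 2)) R) :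
    (M.submatrix (Equiv.swap 0 1) id).det = -M.det := by
  rw [Matrix.det_permute, Equiv.Perm.sign_swap (by simp)]
  simp

lemma OmC_swap (a b x y : Fin 8 → ℂ) : OmC ![b, a, x, y] = -OmC ![a, b, x, y] := by
  simp only [OmC]
  rw [← det_swap_rows_zero_one]
  congr 1
  ext i j
  fin_cases i <;> rfl

lemma OmBarC_swap (a b x y : Fin 8 → ℂ) : OmBarC ![b, a, x, y] = -OmBarC ![a, b, x, y] := by
  simp only [OmBarC]
  rw [← det_swap_rows_zero_one]
  congr 1
  ext i j
  fin_cases i <;> rfl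

lemma PhiC_swap (a b x y : Fin 8 → ℂ) : PhiC b a x y = -PhiC a b x y := by
  rw [PhiC, PhiC, halfOmOm, halfOmOm, OmC_swap, OmBarC_swap, omC_swap a b]
  ring

/-- `π₇(A ∧ B)` evaluated on `(x, y)`. -/
noncomputable def pi7C (A B x y : Fin 8 → ℂ) : ℂ :=
  (1 / 2 : ℂ) * ((gC A x * gC B y - gC A y * gC B x) + PhiC A B x y)

lemma pi7C_swap (A B x y : Fin 8 → ℂ) : pi7C B A x y = -pi7C A B x y := by
  rw [pi7C, pi7C, PhiC_swap]
  ring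

lemma pi7C_zeta01_zeta10 (c b : Fin 4 → ℂ) (h : ∑ j, c j * b j = 0) (x y : Fin 8 → ℂ) :
    pi7C (zeta01 c) (zeta10 b) x y = 0 := by
  have hω : omC (zeta01 c) (zeta10 b) = 0 := by rw [omC_zeta01_zeta10, h, mul_zero]
  have hΩ : OmC ![zeta01 c, zeta10 b, x, y] = 0 := OmC_eq_zero_of_zeta01 _ 0 c rfl
  have hΩbar : OmBarC ![zeta01 c, zeta10 b, x, y] = 0 := OmBarC_eq_zero_of_zeta10 _ 1 b rfl
  simp only [pi7C, PhiC, halfOmOm, hω, hΩ, hΩbar, omC_zeta01_left, omC_zeta10_left]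
  linear_combination (1 / 2 * (gC (zeta01 c) x * gC (zeta10 b) y
    - gC (zeta01 c) y * gC (zeta10 b) x)) * I_mul_I

theorem pi7_vanishes_on_mixed_type_general
    (W : Submodule ℂ (Fin 4 → ℂ))
    (a b : Fin 4 → ℂ) (ha : a ∈ W)
    (hb : ∀ u ∈ W, (∑ j, (starRingEnd ℂ) (u j) * b j) = 0) :
    ∀ x y : Fin 8 → ℂ,
      -- π₇(σ₁) = 0 for σ₁ ∈ Λ^{1,0}W* ⊗ (W^⊥)^{*0,1}, whose sharps are
      -- A = ζ'(ā) (type (0,1), tangent) and B = ζ(b) (type (1,0), normal):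
      (1 / 2 : ℂ) *
        ((gC (zeta01 (fun j => (starRingEnd ℂ) (a j))) x * gC (zeta10 b) y
            - gC (zeta01 (fun j => (starRingEnd ℂ) (a j))) y * gC (zeta10 b) x)
          + PhiC (zeta01 (fun j => (starRingEnd ℂ) (a j))) (zeta10 b) x y) = 0 ∧
      -- π₇(σ₂) = 0 for σ₂ ∈ Λ^{0,1}W* ⊗ (W^⊥)^{*1,0}, whose sharps are
      -- A = ζ(a) (type (1,0), tangent) and B = ζ'(b̄) (type (0,1), normal):
      (1 / 2 : ℂ) *
        ((gC (zeta10 a) x * gC (zeta01 (fun j => (starRingEnd ℂ) (b j))) y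
            - gC (zeta10 a) y * gC (zeta01 (fun j => (starRingEnd ℂ) (b j))) x)
          + PhiC (zeta10 a) (zeta01 (fun j => (starRingEnd ℂ) (b j))) x y) = 0 := by
  intro x y
  have hab : ∑ j, (starRingEnd ℂ) (b j) * a j = 0 := by
    simpa [mul_comm] using congrArg (starRingEnd ℂ) (hb a ha)
  refine ⟨pi7C_zeta01_zeta10 _ b (hb a ha) x y, ?_⟩
  show pi7C (zeta10 a) _ x y = 0
  rw [pi7C_swap, pi7C_zeta01_zeta10 _ a hab, neg_zero]

theorem pi7_vanishes_on_mixed_type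
    (W : Submodule ℂ (Fin 4 → ℂ)) (hW : Module.finrank ℂ W = 2)
    (a b : Fin 4 → ℂ) (ha : a ∈ W)
    (hb : ∀ u ∈ W, (∑ j, (starRingEnd ℂ) (u j) * b j) = 0) :
    ∀ x y : Fin 8 → ℂ,
      -- π₇(σ₁) = 0 for σ₁ ∈ Λ^{1,0}W* ⊗ (W^⊥)^{*0,1}, whose sharps are
      -- A = ζ'(ā) (type (0,1), tangent) and B = ζ(b) (type (1,0), normal):
      (1 / 2 : ℂ) *
        ((gC (zeta01 (fun j => (starRingEnd ℂ) (a j))) x * gC (zeta10 b) y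
            - gC (zeta01 (fun j => (starRingEnd ℂ) (a j))) y * gC (zeta10 b) x)
          + PhiC (zeta01 (fun j => (starRingEnd ℂ) (a j))) (zeta10 b) x y) = 0 ∧
      -- π₇(σ₂) = 0 for σ₂ ∈ Λ^{0,1}W* ⊗ (W^⊥)^{*1,0}, whose sharps are
      -- A = ζ(a) (type (1,0), tangent) and B = ζ'(b̄) (type (0,1), normal):
      (1 / 2 : ℂ) *
        ((gC (zeta10 a) x * gC (zeta01 (fun j => (starRingEnd ℂ) (b j))) y
            - gC (zeta10 a) y * gC (zeta01 (fun j => (starRingEnd ℂ) (b j))) x)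
          + PhiC (zeta10 a) (zeta01 (fun j => (starRingEnd ℂ) (b j))) x y) = 0 :=
  pi7_vanishes_on_mixed_type_general W a b ha hb
end
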